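/- arXiv:2009.13998 — 5 statements merged into one kernel-verified Lean document; each statement's English description precedes it below -/
import Mathlib

section
/- If g : 2^N → ℝ is a non-negative submodular function and S is a random subset of N in which each element appears with probability at most p (not necessarily independently), then E[g(S)] ≥ (1 − p) · g(∅). -/
open Finset

/-- Existence of a nonnegative "base" vector for a nonnegative submodular
function `h` on subsets of `V` with `h ∅ = 0`. -/
private lemma base_exists {α : Type*} [DecidableEq α] (V : Finset α) :
    ∀ h : Finset α → ℝ,
      (∀ X ⊆ V, ∀ Y ⊆ V, h (X ∪ Y) + h (X ∩ Y) ≤ h X + h Y) →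
      (∀ T ⊆ V, 0 ≤ h T) → h ∅ = 0 →
      ∃ z : α → ℝ, (∀ u, 0 ≤ z u) ∧ (∀ T ⊆ V, ∑ u ∈ T, z u ≤ h T) ∧
        ∑ u ∈ V, z u = h V := by
  induction V using Finset.induction_on with
  | empty =>
    intro h hsub hnn h0
    refine ⟨fun _ => 0, fun _ => le_rfl, ?_, by simp [h0]⟩
    intro T hT
    rw [Finset.subset_empty.mp hT]
    simp [h0]
  | @insert a s ha ih =>
    intro h hsub hnn h0
    set za : ℝ := max 0 (h (insert a s) - h s) with hza
    have key : ∀ T ⊆ insert a s, a ∈ T → za ≤ h T := by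
      intro T hT haT
      have hunion : T ∪ s = insert a s := by
        apply subset_antisymm
        · exact union_subset hT (subset_insert a s)
        · intro x hx
          rcases mem_insert.mp hx with rfl | hx
          · exact mem_union_left _ haT
          · exact mem_union_right _ hx
      have h1 := hsub T hT s (subset_insert a s)
      rw [hunion] at h1
      have h2 : 0 ≤ h (T ∩ s) :=
        hnn _ ((inter_subset_right).trans (subset_insert a s))
      have h3 : 0 ≤ h T := hnn T hT
      exact max_le h3 (by linarith)
    set h' : Finset α → ℝ := fun T => min (h T) (h (insert a T) - za) with hh'
    have hins : ∀ T ⊆ s, insert a T ⊆ insert a s := fun T hT =>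
      insert_subset_insert a hT
    have hnn' : ∀ T ⊆ s, 0 ≤ h' T := by
      intro T hT
      refine le_min (hnn T (hT.trans (subset_insert a s))) ?_
      have := key (insert a T) (hins T hT) (mem_insert_self a T)
      linarith
    have h'0 : h' ∅ = 0 := by
      have h1 : za ≤ h (insert a ∅) :=
        key _ (hins ∅ (empty_subset s)) (mem_insert_self a ∅)
      simp only [hh', h0]
      rw [min_eq_left (by linarith)]
    have hsub' : ∀ X ⊆ s, ∀ Y ⊆ s, h' (X ∪ Y) + h' (X ∩ Y) ≤ h' X + h' Y := by
      intro X hX Y hY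
      have haX : a ∉ X := fun hc => ha (hX hc)
      have haY : a ∉ Y := fun hc => ha (hY hc)
      have hXV : X ⊆ insert a s := hX.trans (subset_insert a s)
      have hYV : Y ⊆ insert a s := hY.trans (subset_insert a s)
      have e1 : insert a X ∪ Y = insert a (X ∪ Y) := by
        simp [Finset.insert_union]
      have e2 : X ∪ insert a Y = insert a (X ∪ Y) := by
        simp [Finset.union_insert]
      have e3 : insert a X ∩ Y = X ∩ Y := by
        ext u
        simp only [Finset.mem_inter, Finset.mem_insert]
        constructor
        · rintro ⟨rfl | h, hu⟩
          · exact absurd hu haY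
          · exact ⟨h, hu⟩
        · exact fun ⟨h1, h2⟩ => ⟨Or.inr h1, h2⟩
      have e4 : X ∩ insert a Y = X ∩ Y := by
        ext u
        simp only [Finset.mem_inter, Finset.mem_insert]
        constructor
        · rintro ⟨hu, rfl | h⟩
          · exact absurd hu haX
          · exact ⟨hu, h⟩
        · exact fun ⟨h1, h2⟩ => ⟨h1, Or.inr h2⟩
      have e5 : insert a X ∪ insert a Y = insert a (X ∪ Y) := by
        ext u
        simp only [Finset.mem_union, Finset.mem_insert]
        tauto
      have e6 : insert a X ∩ insert a Y = insert a (X ∩ Y) := by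
        ext u
        simp only [Finset.mem_inter, Finset.mem_insert]
        tauto
      rcases min_cases (h X) (h (insert a X) - za) with ⟨eX, _⟩ | ⟨eX, _⟩ <;>
        rcases min_cases (h Y) (h (insert a Y) - za) with ⟨eY, _⟩ | ⟨eY, _⟩
      · -- both first branch
        have hb := hsub X hXV Y hYV
        have b1 : h' (X ∪ Y) ≤ h (X ∪ Y) := min_le_left _ _
        have b2 : h' (X ∩ Y) ≤ h (X ∩ Y) := min_le_left _ _
        simp only [hh'] at *
        linarith
      · -- X first, Y second
        have hb := hsub X hXV (insert a Y) (hins Y hY)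
        rw [e2, e4] at hb
        have b1 : h' (X ∪ Y) ≤ h (insert a (X ∪ Y)) - za := min_le_right _ _
        have b2 : h' (X ∩ Y) ≤ h (X ∩ Y) := min_le_left _ _
        simp only [hh'] at *
        linarith
      · -- X second, Y first
        have hb := hsub (insert a X) (hins X hX) Y hYV
        rw [e1, e3] at hb
        have b1 : h' (X ∪ Y) ≤ h (insert a (X ∪ Y)) - za := min_le_right _ _
        have b2 : h' (X ∩ Y) ≤ h (X ∩ Y) := min_le_left _ _
        simp only [hh'] at *
        linarith
      · -- both second
        have hb := hsub (insert a X) (hins X hX) (insert a Y) (hins Y hY)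
        rw [e5, e6] at hb
        have b1 : h' (X ∪ Y) ≤ h (insert a (X ∪ Y)) - za := min_le_right _ _
        have b2 : h' (X ∩ Y) ≤ h (insert a (X ∩ Y)) - za := min_le_right _ _
        simp only [hh'] at *
        linarith
    obtain ⟨z', hz'nn, hz'le, hz'sum⟩ := ih h' hsub' hnn' h'0
    refine ⟨fun u => if u = a then za else z' u, ?_, ?_, ?_⟩
    · intro u
      by_cases hu : u = a
      · simp [hu, hza, le_max_left]
      · simp [hu, hz'nn u]
    · intro T hT
      by_cases haT : a ∈ T
      · have hTe : T.erase a ⊆ s := by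
          intro x hx
          have hx1 := mem_erase.mp hx
          rcases mem_insert.mp (hT hx1.2) with h1 | h1
          · exact absurd h1 hx1.1
          · exact h1
        have hTeq : T = insert a (T.erase a) := (insert_erase haT).symm
        rw [hTeq, Finset.sum_insert (notMem_erase a T)]
        have hsum : ∑ u ∈ T.erase a, (if u = a then za else z' u) =
            ∑ u ∈ T.erase a, z' u := by
          apply Finset.sum_congr rfl
          intro u hu
          simp [ne_of_mem_erase hu]
        rw [if_pos rfl, hsum]
        have h1 : ∑ u ∈ T.erase a, z' u ≤ h' (T.erase a) := hz'le _ hTe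
        have h2 : h' (T.erase a) ≤ h (insert a (T.erase a)) - za := min_le_right _ _
        linarith
      · have hTs : T ⊆ s := by
          intro x hx
          rcases mem_insert.mp (hT hx) with rfl | h1
          · exact absurd hx haT
          · exact h1
        have hsum : ∑ u ∈ T, (if u = a then za else z' u) = ∑ u ∈ T, z' u := by
          apply Finset.sum_congr rfl
          intro u hu
          have : u ≠ a := fun hc => ha (hTs (hc ▸ hu))
          simp [this]
        rw [hsum]
        exact (hz'le T hTs).trans (min_le_left _ _)
    · rw [Finset.sum_insert ha, if_pos rfl]
      have hsum : ∑ u ∈ s, (if u = a then za else z' u) = ∑ u ∈ s, z' u := by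
        apply Finset.sum_congr rfl
        intro u hu
        have : u ≠ a := fun hc => ha (hc ▸ hu)
        simp [this]
      rw [hsum, hz'sum]
      have : h' s = min (h s) (h (insert a s) - za) := rfl
      rw [this]
      rcases le_total (h (insert a s)) (h s) with hle | hle
      · have : za = 0 := max_eq_left (by linarith)
        rw [this, min_eq_right (by linarith)]
        ring
      · have : za = h (insert a s) - h s := max_eq_right (by linarith)
        rw [this]
        have : h (insert a s) - (h (insert a s) - h s) = h s := by ring
        rw [this, min_self]
        ring

/-- If `g` is a non-negative submodular function and `S` is a random subset of the
finite ground set in which each element appears with probability at most `p`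
(not necessarily independently), then `E[g(S)] ≥ (1 − p) · g ∅`.  The distribution
of the random set is given by weights `w` summing to `1`. -/
theorem stmt2 {α : Type*} [Fintype α] [DecidableEq α] (g : Finset α → ℝ)
    (hnn : ∀ S : Finset α, 0 ≤ g S)
    (hsub : ∀ X Y : Finset α, g (X ∪ Y) + g (X ∩ Y) ≤ g X + g Y)
    (w : Finset α → ℝ) (hw : ∀ S, 0 ≤ w S) (hw1 : ∑ S : Finset α, w S = 1)
    (p : ℝ) (hp0 : 0 ≤ p) (hp1 : p ≤ 1)
    (hmarg : ∀ u : α, ∑ S ∈ Finset.univ.filter (fun S : Finset α => u ∈ S), w S ≤ p) :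
    (1 - p) * g ∅ ≤ ∑ S : Finset α, w S * g S := by
  -- a global minimizer of g
  obtain ⟨A, -, hAmin⟩ := Finset.exists_min_image (Finset.univ : Finset (Finset α)) g
    ⟨∅, mem_univ ∅⟩
  have hm : ∀ T : Finset α, g A ≤ g T := fun T => hAmin T (mem_univ T)
  -- the reflected function on subsets of A
  set h : Finset α → ℝ := fun T => g (A \ T) - g A with hh
  have hsubh : ∀ X ⊆ A, ∀ Y ⊆ A, h (X ∪ Y) + h (X ∩ Y) ≤ h X + h Y := by
    intro X hX Y hY
    have e1 : A \ X ∪ A \ Y = A \ (X ∩ Y) := by ext u; simp; tauto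
    have e2 : A \ X ∩ (A \ Y) = A \ (X ∪ Y) := by ext u; simp; tauto
    have := hsub (A \ X) (A \ Y)
    rw [e1, e2] at this
    simp only [hh]
    linarith
  have hnnh : ∀ T ⊆ A, 0 ≤ h T := by
    intro T hT
    simp only [hh]
    linarith [hm (A \ T)]
  have h0 : h ∅ = 0 := by simp [hh]
  obtain ⟨z, hznn, hzle, hzsum⟩ := base_exists A h hsubh hnnh h0
  have hAA : h A = g ∅ - g A := by simp [hh]
  -- the dual certificate
  set y : α → ℝ := fun u => if u ∈ A then z u else 0 with hy
  have hynn : ∀ u, 0 ≤ y u := by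
    intro u
    by_cases hu : u ∈ A <;> simp [hy, hu, hznn u]
  -- pointwise bound: g ∅ - y(S) ≤ g S
  have pointwise : ∀ S : Finset α, g ∅ - ∑ u ∈ S, y u ≤ g S := by
    intro S
    have h1 : ∑ u ∈ S ∩ A, y u ≤ ∑ u ∈ S, y u :=
      Finset.sum_le_sum_of_subset_of_nonneg inter_subset_left
        (fun i _ _ => hynn i)
    have h2 : ∑ u ∈ S ∩ A, y u = ∑ u ∈ S ∩ A, z u := by
      apply Finset.sum_congr rfl
      intro u hu
      simp [hy, (mem_inter.mp hu).2]
    have hsplit : ∑ u ∈ A \ (S ∩ A), z u + ∑ u ∈ S ∩ A, z u = ∑ u ∈ A, z u :=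
      Finset.sum_sdiff inter_subset_right
    have h3 : ∑ u ∈ A \ (S ∩ A), z u ≤ h (A \ (S ∩ A)) := hzle _ sdiff_subset
    have h4 : h (A \ (S ∩ A)) = g (S ∩ A) - g A := by
      simp only [hh]
      congr 2
      rw [Finset.sdiff_sdiff_self_left]
      exact inter_eq_right.mpr inter_subset_right
    have h5 : g (S ∩ A) ≤ g S := by
      have := hsub S A
      linarith [hm (S ∪ A)]
    rw [h4] at h3
    rw [hAA] at hzsum
    linarith
  -- summation swap: ∑_S w S * y(S) = ∑_u y u * (marginal u)
  have swap : ∑ S : Finset α, w S * ∑ u ∈ S, y u =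
      ∑ u : α, y u * ∑ S ∈ Finset.univ.filter (fun S : Finset α => u ∈ S), w S := by
    calc ∑ S : Finset α, w S * ∑ u ∈ S, y u
        = ∑ S : Finset α, ∑ u : α, (if u ∈ S then w S * y u else 0) := by
          apply Finset.sum_congr rfl
          intro S _
          rw [Finset.mul_sum, Finset.sum_ite_mem, Finset.univ_inter]
      _ = ∑ u : α, ∑ S : Finset α, (if u ∈ S then w S * y u else 0) :=
          Finset.sum_comm
      _ = ∑ u : α, y u * ∑ S ∈ Finset.univ.filter (fun S : Finset α => u ∈ S), w S := by
          apply Finset.sum_congr rfl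
          intro u _
          rw [Finset.sum_ite, Finset.sum_const_zero, add_zero, Finset.mul_sum]
          apply Finset.sum_congr rfl
          intro S _
          ring
  have hyuniv : ∑ u : α, y u = g ∅ - g A := by
    have : ∑ u : α, y u = ∑ u ∈ A, z u := by
      rw [hy]
      rw [Finset.sum_ite_mem, Finset.univ_inter]
    rw [this, hzsum, hAA]
  -- putting it together
  have step1 : ∑ S : Finset α, w S * (g ∅ - ∑ u ∈ S, y u) ≤ ∑ S : Finset α, w S * g S := by
    apply Finset.sum_le_sum
    intro S _
    exact mul_le_mul_of_nonneg_left (pointwise S) (hw S)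
  have step2 : ∑ S : Finset α, w S * (g ∅ - ∑ u ∈ S, y u) =
      g ∅ - ∑ u : α, y u * ∑ S ∈ Finset.univ.filter (fun S : Finset α => u ∈ S), w S := by
    have : ∑ S : Finset α, w S * (g ∅ - ∑ u ∈ S, y u) =
        (∑ S : Finset α, w S) * g ∅ - ∑ S : Finset α, w S * ∑ u ∈ S, y u := by
      rw [Finset.sum_mul, ← Finset.sum_sub_distrib]
      apply Finset.sum_congr rfl
      intro S _
      ring
    rw [this, hw1, swap, one_mul]
  have step3 : ∑ u : α, y u * ∑ S ∈ Finset.univ.filter (fun S : Finset α => u ∈ S), w S ≤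
      ∑ u : α, y u * p := by
    apply Finset.sum_le_sum
    intro u _
    exact mul_le_mul_of_nonneg_left (hmarg u) (hynn u)
  have step4 : ∑ u : α, y u * p = p * (g ∅ - g A) := by
    rw [← Finset.sum_mul, hyuniv]; ring
  have hgA : 0 ≤ g A := hnn A
  have : p * (g ∅ - g A) ≤ p * g ∅ := by nlinarith
  linarith
end

section
/- Every k-extendible system is a k-system. -/
/-- `I` is downward closed. -/
def DownClosed {α : Type*} (I : Finset α → Prop) : Prop :=
  ∀ ⦃A B : Finset α⦄, A ⊆ B → I B → I A

/-- `A` is a base of `B`: an inclusion-maximal independent subset of `B`. -/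
def IsBase {α : Type*} (I : Finset α → Prop) (B A : Finset α) : Prop :=
  A ⊆ B ∧ I A ∧ ∀ A' : Finset α, A ⊆ A' → A' ⊆ B → I A' → A' = A

/-- `(N, I)` is a `k`-system: a nonempty downward-closed family such that for every
set `B`, the ratio of the sizes of any two bases of `B` is at most `k`. -/
def KSystem {α : Type*} (I : Finset α → Prop) (k : ℕ) : Prop :=
  I ∅ ∧ DownClosed I ∧
    ∀ B A₁ A₂ : Finset α, IsBase I B A₁ → IsBase I B A₂ → A₁.card ≤ k * A₂.card

/-- `(N, I)` is `k`-extendible: a nonempty downward-closed family such that for every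
pair of independent sets `A ⊆ B` and element `u ∉ B` with `A ∪ {u}` independent, there
is `Y ⊆ B \ A` with `|Y| ≤ k` and `(B \ Y) ∪ {u}` independent. -/
def KExtendible {α : Type*} [DecidableEq α] (I : Finset α → Prop) (k : ℕ) : Prop :=
  I ∅ ∧ DownClosed I ∧
    ∀ (A B : Finset α) (u : α), I A → I B → A ⊆ B → u ∉ B → I (insert u A) →
      ∃ Y ⊆ B \ A, Y.card ≤ k ∧ I (insert u (B \ Y))

/-- Every `k`-extendible system is a `k`-system. -/
theorem stmt4 {α : Type*} [DecidableEq α] (I : Finset α → Prop) (k : ℕ) (hk : 1 ≤ k)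
    (h : KExtendible I k) : KSystem I k := by
  obtain ⟨hI0, hdc, hext⟩ := h
  refine ⟨hI0, hdc, ?_⟩
  intro B A₁ A₂ h₁ h₂
  obtain ⟨hA₁B, hIA₁, _⟩ := h₁
  obtain ⟨hA₂B, hIA₂, hmax₂⟩ := h₂
  have key : ∀ n (S : Finset α), (A₂ \ S).card = n → I S → S ⊆ B →
      S.card ≤ A₂.card + (k - 1) * n := by
    intro n
    induction n with
    | zero =>
      intro S hcard hIS hSB
      have hsub : A₂ ⊆ S := by
        rw [Finset.card_eq_zero, Finset.sdiff_eq_empty_iff_subset] at hcard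
        exact hcard
      have := hmax₂ S hsub hSB hIS
      simp [this]
    | succ n ih =>
      intro S hcard hIS hSB
      have hne : (A₂ \ S).Nonempty := by
        rw [← Finset.card_pos, hcard]; omega
      obtain ⟨u, hu⟩ := hne
      rw [Finset.mem_sdiff] at hu
      obtain ⟨huA₂, huS⟩ := hu
      have hAS : I (A₂ ∩ S) := hdc Finset.inter_subset_left hIA₂
      have hins : I (insert u (A₂ ∩ S)) :=
        hdc (Finset.insert_subset huA₂ Finset.inter_subset_left) hIA₂
      obtain ⟨Y, hY, hYcard, hIS'⟩ :=
        hext (A₂ ∩ S) S u hAS hIS Finset.inter_subset_right huS hins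
      have hYsub : ∀ y ∈ Y, y ∈ S ∧ y ∉ A₂ := by
        intro y hy
        have := hY hy
        rw [Finset.mem_sdiff, Finset.mem_inter] at this
        tauto
      set S' := insert u (S \ Y) with hS'
      have hS'B : S' ⊆ B :=
        Finset.insert_subset (hA₂B huA₂) ((Finset.sdiff_subset).trans hSB)
      have hdiff : A₂ \ S' = (A₂ \ S).erase u := by
        ext x
        simp only [hS', Finset.mem_sdiff, Finset.mem_insert, Finset.mem_erase]
        constructor
        · rintro ⟨hx, hx2⟩
          push_neg at hx2
          obtain ⟨hxu, hx3⟩ := hx2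
          refine ⟨hxu, hx, ?_⟩
          intro hxS
          exact (hYsub x (hx3 hxS)).2 hx
        · rintro ⟨hxu, hx, hxS⟩
          refine ⟨hx, ?_⟩
          push_neg
          refine ⟨hxu, fun hxS' => absurd hxS' hxS⟩
      have hdcard : (A₂ \ S').card = n := by
        rw [hdiff, Finset.card_erase_of_mem (Finset.mem_sdiff.2 ⟨huA₂, huS⟩), hcard]; omega
      have hIH := ih S' hdcard hIS' hS'B
      have hS'card : S'.card = (S \ Y).card + 1 := by
        rw [hS', Finset.card_insert_of_notMem (fun hx => huS (Finset.mem_sdiff.1 hx).1)]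
      have hScard : S.card ≤ (S \ Y).card + Y.card := Finset.card_le_card_sdiff_add_card
      have hk1 : (k - 1) * (n + 1) = (k - 1) * n + (k - 1) := by ring
      omega
  have hfin := key (A₂ \ A₁).card A₁ rfl hIA₁ hA₁B
  have hle : (A₂ \ A₁).card ≤ A₂.card := Finset.card_le_card Finset.sdiff_subset
  have hmul : (k - 1) * (A₂ \ A₁).card ≤ (k - 1) * A₂.card :=
    Nat.mul_le_mul_left _ hle
  have hk2 : A₂.card + (k - 1) * A₂.card = k * A₂.card := by
    have : k - 1 + 1 = k := Nat.sub_add_cancel hk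
    calc A₂.card + (k - 1) * A₂.card = (k - 1 + 1) * A₂.card := by ring
      _ = k * A₂.card := by rw [this]
  omega
end

section
/- If (N, I₁) is a k₁-system and (N, I₂) is a k₂-system over the same ground set, then (N, I₁ ∩ I₂) is a (k₁ + k₂)-system. -/
lemma exists_base_superset {α : Type*} [DecidableEq α] (I : Finset α → Prop)
    (S C : Finset α) (hCS : C ⊆ S) (hC : I C) : ∃ A, C ⊆ A ∧ IsBase I S A := by
  classical
  have hne : (S.powerset.filter (fun A => C ⊆ A ∧ I A)).Nonempty :=
    ⟨C, by simp [Finset.mem_powerset, hCS, hC]⟩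
  obtain ⟨A, hA, hmax⟩ := Finset.exists_max_image _ Finset.card hne
  simp only [Finset.mem_filter, Finset.mem_powerset] at hA
  refine ⟨A, hA.2.1, hA.1, hA.2.2, fun A' hAA' hA'S hIA' => ?_⟩
  have hmem : A' ∈ S.powerset.filter (fun A => C ⊆ A ∧ I A) := by
    simp only [Finset.mem_filter, Finset.mem_powerset]
    exact ⟨hA'S, hA.2.1.trans hAA', hIA'⟩
  exact (Finset.eq_of_subset_of_card_le hAA' (hmax _ hmem)).symm

/-- In a k-system, any independent subset of `S` has size at most `k` times
the size of any base of `S`. -/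
lemma indep_le_of_base {α : Type*} [DecidableEq α] {I : Finset α → Prop} {k : ℕ}
    (h : KSystem I k) {S C A : Finset α} (hCS : C ⊆ S) (hC : I C)
    (hA : IsBase I S A) : C.card ≤ k * A.card := by
  obtain ⟨A', hCA', hA'⟩ := exists_base_superset I S C hCS hC
  exact le_trans (Finset.card_le_card hCA') (h.2.2 S A' A hA' hA)

/-- If `(N, I₁)` is a `k₁`-system and `(N, I₂)` is a `k₂`-system over the same ground
set, then their intersection is a `(k₁ + k₂)`-system. -/
theorem stmt5 {α : Type*} (I₁ I₂ : Finset α → Prop) (k₁ k₂ : ℕ)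
    (hk₁ : 1 ≤ k₁) (hk₂ : 1 ≤ k₂)
    (h₁ : KSystem I₁ k₁) (h₂ : KSystem I₂ k₂) :
    KSystem (fun S => I₁ S ∧ I₂ S) (k₁ + k₂) := by
  classical
  refine ⟨⟨h₁.1, h₂.1⟩, fun A B hAB hB => ⟨h₁.2.1 hAB hB.1, h₂.2.1 hAB hB.2⟩, ?_⟩
  rintro B A₁ A₂ ⟨hA₁B, ⟨hI₁A₁, hI₂A₁⟩, hmax₁⟩ ⟨hA₂B, ⟨hI₁A₂, hI₂A₂⟩, hmax₂⟩
  set D₁ := (A₁ \ A₂).filter (fun x => ¬ I₁ (insert x A₂)) with hD₁def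
  set D₂ := (A₁ \ A₂).filter (fun x => I₁ (insert x A₂)) with hD₂def
  -- elements of D₂ are blocked in I₂
  have hblock₂ : ∀ x ∈ D₂, ¬ I₂ (insert x A₂) := by
    intro x hx hI2
    simp only [hD₂def, Finset.mem_filter, Finset.mem_sdiff] at hx
    have hsub : insert x A₂ ⊆ B := Finset.insert_subset (hA₁B hx.1.1) hA₂B
    have := hmax₂ (insert x A₂) (Finset.subset_insert _ _) hsub ⟨hx.2, hI2⟩
    exact hx.1.2 (this ▸ Finset.mem_insert_self x A₂)
  -- A₂ is a base of A₂ ∪ D₁ in I₁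
  have hbase₁ : IsBase I₁ (A₂ ∪ D₁) A₂ := by
    refine ⟨Finset.subset_union_left, hI₁A₂, fun A' hA₂A' hA'sub hIA' => ?_⟩
    by_contra hne
    obtain ⟨x, hxA', hxA₂⟩ := Finset.exists_of_ssubset (hA₂A'.ssubset_of_ne (Ne.symm hne))
    have hxD₁ : x ∈ D₁ := (Finset.mem_union.1 (hA'sub hxA')).resolve_left hxA₂
    have : I₁ (insert x A₂) :=
      h₁.2.1 (Finset.insert_subset hxA' hA₂A') hIA'
    simp only [hD₁def, Finset.mem_filter] at hxD₁
    exact hxD₁.2 this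
  -- A₂ is a base of A₂ ∪ D₂ in I₂
  have hbase₂ : IsBase I₂ (A₂ ∪ D₂) A₂ := by
    refine ⟨Finset.subset_union_left, hI₂A₂, fun A' hA₂A' hA'sub hIA' => ?_⟩
    by_contra hne
    obtain ⟨x, hxA', hxA₂⟩ := Finset.exists_of_ssubset (hA₂A'.ssubset_of_ne (Ne.symm hne))
    have hxD₂ : x ∈ D₂ := (Finset.mem_union.1 (hA'sub hxA')).resolve_left hxA₂
    have : I₂ (insert x A₂) :=
      h₂.2.1 (Finset.insert_subset hxA' hA₂A') hIA'
    exact hblock₂ x hxD₂ this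
  -- bound 1 : |D₁ ∪ (A₁ ∩ A₂)| ≤ k₁ |A₂|
  have hC₁sub : D₁ ∪ (A₁ ∩ A₂) ⊆ A₂ ∪ D₁ := by
    intro x hx
    rcases Finset.mem_union.1 hx with h | h
    · exact Finset.mem_union_right _ h
    · exact Finset.mem_union_left _ (Finset.mem_inter.1 h).2
  have hC₁indep : I₁ (D₁ ∪ (A₁ ∩ A₂)) := by
    refine h₁.2.1 ?_ hI₁A₁
    intro x hx
    rcases Finset.mem_union.1 hx with h | h
    · exact (Finset.mem_sdiff.1 (Finset.mem_of_mem_filter _ h)).1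
    · exact (Finset.mem_inter.1 h).1
  have hb1 : (D₁ ∪ (A₁ ∩ A₂)).card ≤ k₁ * A₂.card :=
    indep_le_of_base h₁ hC₁sub hC₁indep hbase₁
  -- bound 2 : |D₂| ≤ k₂ |A₂|
  have hD₂indep : I₂ D₂ := by
    refine h₂.2.1 ?_ hI₂A₁
    intro x hx
    exact (Finset.mem_sdiff.1 (Finset.mem_of_mem_filter _ hx)).1
  have hb2 : D₂.card ≤ k₂ * A₂.card :=
    indep_le_of_base h₂ Finset.subset_union_right hD₂indep hbase₂
  -- counting
  have hdisj : Disjoint D₁ (A₁ ∩ A₂) := by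
    refine Finset.disjoint_left.2 fun x hx hx' => ?_
    exact (Finset.mem_sdiff.1 (Finset.mem_of_mem_filter _ hx)).2 (Finset.mem_inter.1 hx').2
  have hcardC₁ : (D₁ ∪ (A₁ ∩ A₂)).card = D₁.card + (A₁ ∩ A₂).card :=
    Finset.card_union_of_disjoint hdisj
  have hsplit : D₁.card + D₂.card = (A₁ \ A₂).card := by
    rw [hD₁def, hD₂def, Nat.add_comm]
    exact Finset.card_filter_add_card_filter_not (p := fun x => I₁ (insert x A₂))
  have hA₁card : A₁.card = (A₁ ∩ A₂).card + (A₁ \ A₂).card :=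
    (Finset.card_inter_add_card_sdiff A₁ A₂).symm
  calc A₁.card = (A₁ ∩ A₂).card + (D₁.card + D₂.card) := by rw [hA₁card, hsplit]
    _ = (D₁ ∪ (A₁ ∩ A₂)).card + D₂.card := by rw [hcardC₁]; ring
    _ ≤ k₁ * A₂.card + k₂ * A₂.card := Nat.add_le_add hb1 hb2
    _ = (k₁ + k₂) * A₂.card := by ring
end

section
/- If (N, I₁) is a k₁-extendible system and (N, I₂) is a k₂-extendible system over the same ground set, then (N, I₁ ∩ I₂) is a (k₁ + k₂)-extendible system. -/
/-- If `(N, I₁)` is a `k₁`-extendible system and `(N, I₂)` is a `k₂`-extendible system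
over the same ground set, then their intersection is a `(k₁ + k₂)`-extendible system. -/
theorem stmt6 {α : Type*} [DecidableEq α] (I₁ I₂ : Finset α → Prop) (k₁ k₂ : ℕ)
    (h₁ : KExtendible I₁ k₁) (h₂ : KExtendible I₂ k₂) :
    KExtendible (fun S => I₁ S ∧ I₂ S) (k₁ + k₂) := by
  obtain ⟨he₁, hd₁, hx₁⟩ := h₁
  obtain ⟨he₂, hd₂, hx₂⟩ := h₂
  refine ⟨⟨he₁, he₂⟩, fun A B hAB hB => ⟨hd₁ hAB hB.1, hd₂ hAB hB.2⟩, ?_⟩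
  intro A B u hA hB hAB hu hins
  obtain ⟨Y₁, hY₁, hc₁, hi₁⟩ := hx₁ A B u hA.1 hB.1 hAB hu hins.1
  obtain ⟨Y₂, hY₂, hc₂, hi₂⟩ := hx₂ A B u hA.2 hB.2 hAB hu hins.2
  refine ⟨Y₁ ∪ Y₂, Finset.union_subset hY₁ hY₂,
    le_trans (Finset.card_union_le _ _) (Nat.add_le_add hc₁ hc₂), ?_, ?_⟩
  · exact hd₁ (Finset.insert_subset_insert u (Finset.sdiff_subset_sdiff le_rfl
      Finset.subset_union_left)) hi₁
  · exact hd₂ (Finset.insert_subset_insert u (Finset.sdiff_subset_sdiff le_rfl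
      Finset.subset_union_right)) hi₂
end

section
/- Fix positive integers k, h, m with h an integer multiple of 2k. Let the ground set be N = ⋃_{i=1}^h H_i where H_i = {u_{i,j} : 1 ≤ j ≤ km} are disjoint sets of size km. Define g(x) = min{x, 2km/h} + max{(x − 2km/h)/k, 0} and declare S ⊆ N independent iff g(|S ∩ H_1|) + |S \ H_1| ≤ m. Then this family of independent sets is a k-extendible system. -/
/-- The piecewise-linear budget function
`g(x) = min{x, 2km/h} + max{(x − 2km/h)/k, 0}` of the hardness construction. -/
noncomputable def gfun (k h m : ℕ) (x : ℝ) : ℝ :=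
  min x (2 * (k : ℝ) * m / h) + max ((x - 2 * (k : ℝ) * m / h) / k) 0


lemma gfun_eq (k h m : ℕ) (hk : 0 < k) (x : ℝ) :
    gfun k h m x = x / k + (1 - 1 / k) * min x (2 * (k : ℝ) * m / h) := by
  unfold gfun
  rcases le_total x (2 * (k : ℝ) * m / h) with hx | hx
  · rw [min_eq_left hx, max_eq_right
      (div_nonpos_of_nonpos_of_nonneg (by linarith) (Nat.cast_nonneg k))]
    ring
  · rw [min_eq_right hx, max_eq_left
      (div_nonneg (by linarith) (Nat.cast_nonneg k))]
    ring

lemma gfun_ub (k h m : ℕ) (hk : 0 < k)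
    {x y : ℝ} (hxy : x ≤ y) : gfun k h m y ≤ gfun k h m x + (y - x) := by
  have hk1 : (1:ℝ) ≤ k := by exact_mod_cast hk
  have hk0 : (0:ℝ) < k := by positivity
  rw [gfun_eq k h m hk, gfun_eq k h m hk]
  set c := 2 * (k : ℝ) * m / h
  have h1 : min y c ≤ min x c + (y - x) := by
    rcases le_total y c with h | h
    · rw [min_eq_left h]; rcases le_total x c with h'|h' <;>
        simp [min_eq_left, min_eq_right, *] <;> linarith
    · rw [min_eq_right h]; rcases le_total x c with h'|h' <;>
        simp [min_eq_left, min_eq_right, *] <;> linarith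
  have h2 : (0:ℝ) ≤ 1 - 1 / k := by
    have : 1 / (k:ℝ) ≤ 1 := by rw [div_le_one hk0]; exact hk1
    linarith
  have hm1 := mul_le_mul_of_nonneg_left h1 h2
  have he : y / k + (1 - 1/k) * (min x c + (y - x))
      = x / k + (1 - 1/k) * min x c + (y - x) + ((y - x) - (y - x) / k - ((1 - 1/k) * (y - x))) := by
    ring
  have he2 : (y - x) - (y - x) / k - ((1 - 1/k) * (y - x)) = 0 := by ring
  linarith

lemma gfun_lb (k h m : ℕ) (hk : 0 < k)
    {x y : ℝ} (hxy : x ≤ y) : gfun k h m x + (y - x) / k ≤ gfun k h m y := by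
  have hk1 : (1:ℝ) ≤ k := by exact_mod_cast hk
  have hk0 : (0:ℝ) < k := by positivity
  rw [gfun_eq k h m hk, gfun_eq k h m hk]
  set c := 2 * (k : ℝ) * m / h
  have h2 : (0:ℝ) ≤ 1 - 1 / k := by
    have : 1 / (k:ℝ) ≤ 1 := by rw [div_le_one hk0]; exact hk1
    linarith
  have hm1 := mul_le_mul_of_nonneg_left (min_le_min hxy (le_refl c)) h2
  have he : x / k + (y - x) / k = y / k := by ring
  linarith

lemma gfun_mono (k h m : ℕ) (hk : 0 < k) {x y : ℝ} (hxy : x ≤ y) :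
    gfun k h m x ≤ gfun k h m y := by
  have hk0 : (0:ℝ) < k := by positivity
  have := gfun_lb k h m hk hxy
  have : (0:ℝ) ≤ (y - x) / k := div_nonneg (by linarith) hk0.le
  linarith [gfun_lb k h m hk hxy]

lemma sigma1 (k h m : ℕ) (hk : 0 < k) {aS bS aT bT : ℝ} (h1 : aS ≤ aT)
    (h3 : aT + bT ≤ aS + bS + 1) : gfun k h m aT + bT ≤ gfun k h m aS + bS + 1 := by
  have := gfun_ub k h m hk h1; linarith

lemma sigma2 (k h m : ℕ) (hk : 0 < k) {aS bS aB bB : ℝ} (h1 : aS ≤ aB) (h2 : bS ≤ bB)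
    (h3 : aS + bS + k ≤ aB + bB) : gfun k h m aS + bS + 1 ≤ gfun k h m aB + bB := by
  have hk0 : (0:ℝ) < k := by positivity
  have hk1 : (1:ℝ) ≤ k := by exact_mod_cast hk
  have key : (1:ℝ) ≤ (aB - aS) / k + (bB - bS) := by
    have e : (aB - aS) / k + (bB - bS) = ((aB - aS) + k * (bB - bS)) / k := by
      field_simp
    rw [e, le_div_iff₀ hk0]
    nlinarith
  have := gfun_lb k h m hk h1
  linarith

/-- The first block `H₁ = {u_{1,j} : 1 ≤ j ≤ km}` of the ground set
`N = ⋃_{i=1}^h H_i`, with ground set realized as `Fin h × Fin (k*m)`. -/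
def H1 (k h m : ℕ) : Finset (Fin h × Fin (k * m)) :=
  Finset.univ.filter (fun p => (p.1 : ℕ) = 0)

/-- A set `S` is independent iff `g(|S ∩ H₁|) + |S \ H₁| ≤ m`. -/
def Indep (k h m : ℕ) (S : Finset (Fin h × Fin (k * m))) : Prop :=
  gfun k h m ((S ∩ H1 k h m).card : ℝ) + ((S \ H1 k h m).card : ℝ) ≤ (m : ℝ)

/-- The family of independent sets of the hardness construction is a `k`-extendible
system: it contains the empty set, is downward closed, and satisfies the
`k`-extendibility exchange property. -/
theorem stmt16 (k h m : ℕ) (hk : 0 < k) (hh : 0 < h) (hm : 0 < m) (hdvd : 2 * k ∣ h) :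
    Indep k h m ∅ ∧
      (∀ A B : Finset (Fin h × Fin (k * m)), A ⊆ B → Indep k h m B → Indep k h m A) ∧
      (∀ (A B : Finset (Fin h × Fin (k * m))) (u : Fin h × Fin (k * m)),
        Indep k h m A → Indep k h m B → A ⊆ B → u ∉ B → Indep k h m (insert u A) →
          ∃ Y ⊆ B \ A, Y.card ≤ k ∧ Indep k h m (insert u (B \ Y))) := by
  have hk0 : (0:ℝ) < k := by positivity
  refine ⟨?_, ?_, ?_⟩
  · unfold Indep
    simp only [Finset.empty_inter, Finset.empty_sdiff, Finset.card_empty, Nat.cast_zero,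
      add_zero]
    have hcnn : (0:ℝ) ≤ 2 * (k:ℝ) * m / h := by positivity
    rw [gfun_eq k h m hk, min_eq_left hcnn]
    simp
  · intro A B hAB hB
    unfold Indep at *
    have ha : ((A ∩ H1 k h m).card : ℝ) ≤ ((B ∩ H1 k h m).card : ℝ) := by
      exact_mod_cast Finset.card_le_card (Finset.inter_subset_inter hAB Finset.Subset.rfl)
    have hb : ((A \ H1 k h m).card : ℝ) ≤ ((B \ H1 k h m).card : ℝ) := by
      exact_mod_cast Finset.card_le_card (Finset.sdiff_subset_sdiff hAB Finset.Subset.rfl)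
    have := gfun_mono k h m hk ha
    linarith
  · intro A B u hA hB hAB huB hiA
    rcases le_or_gt k ((B \ A).card) with hge | hlt
    · obtain ⟨Y, hYsub, hYcard⟩ := Finset.exists_subset_card_eq hge
      refine ⟨Y, hYsub, hYcard.le, ?_⟩
      set S := B \ Y with hSdef
      set T := insert u S with hTdef
      have hYB : Y ⊆ B := hYsub.trans (Finset.sdiff_subset)
      have hSB : S ⊆ B := Finset.sdiff_subset
      have hST : S ⊆ T := Finset.subset_insert _ _
      have hcardS : S.card + Y.card = B.card := Finset.card_sdiff_add_card_eq_card hYB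
      have hcardT : T.card ≤ S.card + 1 := Finset.card_insert_le _ _
      have eS := Finset.card_inter_add_card_sdiff S (H1 k h m)
      have eT := Finset.card_inter_add_card_sdiff T (H1 k h m)
      have eB := Finset.card_inter_add_card_sdiff B (H1 k h m)
      have haST : ((S ∩ H1 k h m).card : ℝ) ≤ ((T ∩ H1 k h m).card : ℝ) := by
        exact_mod_cast Finset.card_le_card (Finset.inter_subset_inter hST Finset.Subset.rfl)
      have hbST : ((S \ H1 k h m).card : ℝ) ≤ ((T \ H1 k h m).card : ℝ) := by
        exact_mod_cast Finset.card_le_card (Finset.sdiff_subset_sdiff hST Finset.Subset.rfl)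
      have haSB : ((S ∩ H1 k h m).card : ℝ) ≤ ((B ∩ H1 k h m).card : ℝ) := by
        exact_mod_cast Finset.card_le_card (Finset.inter_subset_inter hSB Finset.Subset.rfl)
      have hbSB : ((S \ H1 k h m).card : ℝ) ≤ ((B \ H1 k h m).card : ℝ) := by
        exact_mod_cast Finset.card_le_card (Finset.sdiff_subset_sdiff hSB Finset.Subset.rfl)
      have hsum1 : ((T ∩ H1 k h m).card : ℝ) + ((T \ H1 k h m).card : ℝ)
          ≤ ((S ∩ H1 k h m).card : ℝ) + ((S \ H1 k h m).card : ℝ) + 1 := by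
        have h' : (T ∩ H1 k h m).card + (T \ H1 k h m).card
            ≤ (S ∩ H1 k h m).card + (S \ H1 k h m).card + 1 := by omega
        exact_mod_cast h'
      have hsum2 : ((S ∩ H1 k h m).card : ℝ) + ((S \ H1 k h m).card : ℝ) + (k:ℝ)
          ≤ ((B ∩ H1 k h m).card : ℝ) + ((B \ H1 k h m).card : ℝ) := by
        have h' : (S ∩ H1 k h m).card + (S \ H1 k h m).card + k
            ≤ (B ∩ H1 k h m).card + (B \ H1 k h m).card := by omega
        exact_mod_cast h'
      have s1 := sigma1 k h m hk haST hsum1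
      have s2 := sigma2 k h m hk haSB hbSB hsum2
      unfold Indep at hB ⊢
      linarith
    · refine ⟨B \ A, Finset.Subset.refl _, hlt.le, ?_⟩
      rwa [Finset.sdiff_sdiff_self_left, Finset.inter_eq_right.2 hAB]
end
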